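/- arXiv:1004.3416 — 5 statements merged into one kernel-verified Lean document; each statement's English description precedes it below -/
import Mathlib

section
/- Let {A_v}_{v∈V} be a finite collection of events in a probability space, where the index set V is the vertex set of a path graph G = (V,E) on n ≥ 1 vertices. Then Pr(⋃_{v∈V} A_v) ≥ (1/⌈n/2⌉) · ( Σ_{v∈V} Pr(A_v) − Σ_{{v,w}∈E} Pr(A_v ∩ A_w) ). -/
open MeasureTheory Finset
open scoped Classical

/-! Split the path into the `⌈n/2⌉` blocks `{2j, 2j+1}` of consecutive vertices (the last block may
be a single vertex). By inclusion–exclusion each block contributes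
`Pr(A_{2j}) + Pr(A_{2j+1}) - Pr(A_{2j} ∩ A_{2j+1}) = Pr(A_{2j} ∪ A_{2j+1}) ≤ Pr(⋃ A_v)`, and the
remaining edges `{2j+1, 2j+2}` only subtract nonnegative terms. -/

theorem Nat.ceil_natCast_div_two {K : Type*} [Field K] [LinearOrder K] [IsStrictOrderedRing K]
    [FloorSemiring K] (n : ℕ) : ⌈(n : K) / 2⌉₊ = (n + 1) / 2 := by
  rcases Nat.even_or_odd' n with ⟨k, rfl | rfl⟩
  · have : ((2 * k : ℕ) : K) / 2 = k := by push_cast; ring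
    rw [this, Nat.ceil_natCast]; omega
  · rw [Nat.ceil_eq_iff (by omega), show (2 * k + 1 + 1) / 2 = k + 1 by omega]
    push_cast
    constructor <;> linarith

theorem sum_range_sub_sum_range_le_mul_of_add_sub_le {a b : ℕ → ℝ} {U : ℝ} (ha : ∀ i, 0 ≤ a i)
    (hb : ∀ i, 0 ≤ b i) (hab : ∀ i, a i + a (i + 1) - b i ≤ U) (N : ℕ) :
    ∑ i ∈ range N, a i - ∑ i ∈ range N, b i ≤ ((N + 1) / 2 : ℕ) * U := by
  induction N using Nat.twoStepInduction with
  | zero => simp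
  | one => simpa using (by linarith [hab 0, ha 1] : a 0 - b 0 ≤ U)
  | more N ih _ =>
    have hN : (N + 2 + 1) / 2 = (N + 1) / 2 + 1 := by omega
    simp only [sum_range_succ, hN, Nat.cast_add, Nat.cast_one]
    linarith [hab N, hb (N + 1)]

theorem MeasureTheory.measureReal_add_measureReal_sub_inter_le {Ω : Type*} [MeasurableSpace Ω]
    {μ : Measure Ω} [IsFiniteMeasure μ] {s t u : Set Ω} (ht : MeasurableSet t) (hu : s ∪ t ⊆ u) :
    μ.real s + μ.real t - μ.real (s ∩ t) ≤ μ.real u := by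
  linarith [measureReal_union_add_inter (μ := μ) (s := s) ht, measureReal_mono (μ := μ) hu]

theorem MeasureTheory.sum_measureReal_sub_sum_measureReal_inter_succ_le {Ω : Type*}
    [MeasurableSpace Ω] (μ : Measure Ω) [IsFiniteMeasure μ] {B : ℕ → Set Ω}
    (hB : ∀ i, MeasurableSet (B i)) (N : ℕ) :
    ∑ i ∈ range N, μ.real (B i) - ∑ i ∈ range N, μ.real (B i ∩ B (i + 1)) ≤
      ((N + 1) / 2 : ℕ) * μ.real (⋃ i, B i) :=
  sum_range_sub_sum_range_le_mul_of_add_sub_le (fun _ => measureReal_nonneg)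
    (fun _ => measureReal_nonneg) (fun i => measureReal_add_measureReal_sub_inter_le (hB (i + 1))
      (Set.union_subset (Set.subset_iUnion B i) (Set.subset_iUnion B (i + 1)))) N

theorem SimpleGraph.sum_edgeFinset_pathGraph {M : Type*} [AddCommMonoid M] (n : ℕ)
    [Fintype (pathGraph (n + 1)).edgeSet] (g : Sym2 (Fin (n + 1)) → M) :
    ∑ e ∈ (pathGraph (n + 1)).edgeFinset, g e = ∑ i : Fin n, g s(i.castSucc, i.succ) := by
  symm
  refine sum_bij (fun i _ => s(i.castSucc, i.succ)) (fun i _ => ?_) (fun i _ j _ h => ?_) ?_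
    (fun _ _ => rfl)
  · simp [pathGraph_adj]
  · simp [Fin.ext_iff] at h; omega
  · intro e he
    induction e using Sym2.ind with
    | _ u v =>
      rw [mem_edgeFinset, mem_edgeSet, pathGraph_adj] at he
      rcases he with h | h
      · exact ⟨⟨u, by omega⟩, mem_univ _, by simp [h]⟩
      · exact ⟨⟨v, by omega⟩, mem_univ _, by simp [Fin.ext_iff, h]⟩

theorem path_graph_lower_bound {Ω : Type*} [MeasurableSpace Ω]
    (μ : Measure Ω) [IsProbabilityMeasure μ] (n : ℕ)
    (A : Fin n → Set Ω) (hA : ∀ v, MeasurableSet (A v)) :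
    (μ (⋃ v, A v)).toReal ≥
      (1 / (⌈(n : ℝ) / 2⌉₊ : ℝ)) *
        (∑ v, (μ (A v)).toReal -
          ∑ e ∈ (SimpleGraph.pathGraph n).edgeFinset,
            Sym2.lift ⟨fun v w => (μ (A v ∩ A w)).toReal,
              fun v w => by simp [Set.inter_comm]⟩ e) := by
  rcases n with _ | m
  · simp
  set B : ℕ → Set Ω := fun i => if h : i < m + 1 then A ⟨i, h⟩ else ∅ with hB
  have hBA (v : Fin (m + 1)) : B v = A v := dif_pos v.isLt
  have hB_meas (i : ℕ) : MeasurableSet (B i) := by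
    simp only [hB]
    split <;> simp [hA]
  have hunion : ⋃ i, B i = ⋃ v, A v := by
    ext
    simp only [hB, Set.mem_iUnion, Fin.exists_iff]
    grind
  have hvert : ∑ v, μ.real (A v) = ∑ i ∈ range (m + 1), μ.real (B i) := by
    simp only [← Fin.sum_univ_eq_sum_range, hBA]
  have hedge : ∑ e ∈ (SimpleGraph.pathGraph (m + 1)).edgeFinset,
      Sym2.lift ⟨fun v w => μ.real (A v ∩ A w), fun v w => by simp [Set.inter_comm]⟩ e =
      ∑ i ∈ range (m + 1), μ.real (B i ∩ B (i + 1)) := by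
    have hB_last : B (m + 1) = ∅ := dif_neg (by omega)
    rw [SimpleGraph.sum_edgeFinset_pathGraph, sum_range_succ, hB_last, Set.inter_empty,
      measureReal_empty, add_zero, ← Fin.sum_univ_eq_sum_range]
    refine sum_congr rfl fun i _ => ?_
    show μ.real (A i.castSucc ∩ A i.succ) = _
    rw [← hBA i.castSucc, ← hBA i.succ]
    rfl
  have key := sum_measureReal_sub_sum_measureReal_inter_succ_le μ hB_meas (m + 1)
  simp only [← measureReal_def]
  rw [Nat.ceil_natCast_div_two, ge_iff_le, one_div_mul_eq_div, hvert, hedge, ← hunion]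
  exact div_le_of_le_mul₀ (Nat.cast_nonneg _) measureReal_nonneg (by linarith)
end

section
/- Let A_1, …, A_n be a non-empty finite collection of events in a probability space (n ≥ 1). Then Pr(⋃_{i=1}^n A_i) ≥ (1/⌈n/2⌉) · ( Σ_{i=1}^n Pr(A_i) − (2/n) · Σ_{1≤i<j≤n} Pr(A_i ∩ A_j) ). -/
/-!
Let `N ω` be the number of events containing `ω`. Then `∑ i, 1_{A i} = N` and
`∑_{i<j} 1_{A i ∩ A j} = N (N - 1) / 2`, so the bracket on the right is the expectation of
`N - N (N - 1) / n`. For an integer `1 ≤ N ≤ n` this is at most `⌈n / 2⌉`, because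
`N (n + 1 - N) ≤ n ⌈n / 2⌉`, and it vanishes off `⋃ i, A i`. Integrating the pointwise bound
`N - N (N - 1) / n ≤ ⌈n / 2⌉ 1_{⋃ i, A i}` gives the theorem.
-/

open MeasureTheory Finset

theorem Int.mul_sub_one_nonneg (a : ℤ) : 0 ≤ a * (a - 1) := by
  rcases le_or_gt a 0 with h | h
  · exact mul_nonneg_of_nonpos_of_nonpos h (by omega)
  · exact mul_nonneg h.le (by omega)

theorem mul_sub_le_mul_ceil_half (t n : ℕ) :
    (t : ℝ) * (n + 1 - t) ≤ n * ⌈(n : ℝ) / 2⌉₊ := by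
  set m := ⌈(n : ℝ) / 2⌉₊
  have hlow : (n : ℝ) / 2 ≤ m := Nat.le_ceil _
  have hupp : (m : ℝ) < n / 2 + 1 := Nat.ceil_lt_add_one (by positivity)
  have hm : 2 * m = n ∨ 2 * m = n + 1 := by
    have : n ≤ 2 * m := by exact_mod_cast (by linarith : (n : ℝ) ≤ 2 * m)
    have : 2 * m < n + 2 := by exact_mod_cast (by linarith : (2 * m : ℝ) < n + 2)
    omega
  suffices h : (t : ℤ) * (n + 1 - t) ≤ n * m by exact_mod_cast h
  -- n m - t (n + 1 - t) = (t - m) (t - (n + 1 - m)) + m (m - 1), and n + 1 - m ∈ {m, m + 1}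
  rcases hm with h | h <;> zify at h
  · nlinarith [(t - m : ℤ).mul_sub_one_nonneg, (m : ℤ).mul_sub_one_nonneg]
  · nlinarith [sq_nonneg ((t : ℤ) - m), (m : ℤ).mul_sub_one_nonneg]

theorem sub_sq_sub_div_le_ceil_half {t n : ℕ} (ht : t ≤ n) :
    (t : ℝ) - ((t : ℝ) ^ 2 - t) / n ≤ ⌈(n : ℝ) / 2⌉₊ := by
  rcases t.eq_zero_or_pos with rfl | ht0
  · simp
  have hn : (0 : ℝ) < n := by exact_mod_cast ht0.trans_le ht
  have key := mul_sub_le_mul_ceil_half t n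
  rw [← sub_nonneg] at key ⊢
  have : (⌈(n : ℝ) / 2⌉₊ : ℝ) - ((t : ℝ) - ((t : ℝ) ^ 2 - t) / n)
      = (n * ⌈(n : ℝ) / 2⌉₊ - t * (n + 1 - t)) / n := by
    field_simp
    ring
  rw [this]
  positivity

theorem two_mul_sum_sum_lt_mul {ι R : Type*} [Fintype ι] [LinearOrder ι] [CommRing R]
    (x : ι → R) :
    2 * ∑ i, ∑ j ∈ univ.filter (fun j => i < j), x i * x j = (∑ i, x i) ^ 2 - ∑ i, x i ^ 2 := by
  have hsplit : ∀ i j, x i * x j = (if i < j then x i * x j else 0)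
      + (if j < i then x j * x i else 0) + (if i = j then x i ^ 2 else 0) := by
    intro i j
    rcases lt_trichotomy i j with h | rfl | h
    · simp [h, h.ne, h.not_gt]
    · simp [sq]
    · simp [h, h.ne', h.not_gt, mul_comm]
  have hswap : ∑ i, ∑ j, (if j < i then x j * x i else 0)
      = ∑ i, ∑ j, (if i < j then x i * x j else 0) := sum_comm
  rw [sq, sum_mul_sum, Fintype.sum_congr _ _ fun i => Fintype.sum_congr _ _ (hsplit i)]
  simp only [sum_add_distrib, hswap, sum_ite_eq, mem_univ, if_true, sum_filter]
  ring

section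

variable {Ω : Type*}

theorem sum_indicator_sub_pairs_le {n : ℕ} (A : Fin n → Set Ω) (ω : Ω) :
    ∑ i, (A i).indicator 1 ω
        - 2 / (n : ℝ) * ∑ i, ∑ j ∈ univ.filter (fun j => i < j), (A i ∩ A j).indicator 1 ω
      ≤ ⌈(n : ℝ) / 2⌉₊ * (⋃ i, A i).indicator 1 ω := by
  classical
  set x : Fin n → ℝ := fun i => (A i).indicator 1 ω
  set t := #(univ.filter fun i => ω ∈ A i)
  have hsum : ∑ i, x i = t := by simp [x, t, Set.indicator_apply, sum_boole]
  have hsq : ∀ i, x i ^ 2 = x i := fun i => by by_cases h : ω ∈ A i <;> simp [x, h]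
  have hpairs : ∑ i, ∑ j ∈ univ.filter (fun j => i < j), (A i ∩ A j).indicator 1 ω
      = ((t : ℝ) ^ 2 - t) / 2 := by
    have := two_mul_sum_sum_lt_mul x
    simp only [hsq, hsum] at this
    simp only [Set.inter_indicator_one, Pi.mul_apply]
    linarith
  have hbracket : ∑ i, x i - 2 / (n : ℝ) * ((t ^ 2 - t) / 2) = t - ((t : ℝ) ^ 2 - t) / n := by
    rw [hsum]
    ring
  rw [hpairs, hbracket]
  by_cases hω : ω ∈ ⋃ i, A i
  · rw [Set.indicator_of_mem hω, Pi.one_apply, mul_one]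
    exact sub_sq_sub_div_le_ceil_half ((card_filter_le _ _).trans_eq (card_fin n))
  · have ht : t = 0 := by simpa [t, filter_eq_empty_iff] using hω
    simp [Set.indicator_of_notMem hω, ht]

variable [MeasurableSpace Ω] (μ : Measure Ω) [IsFiniteMeasure μ]

theorem integrable_sum_indicator_one {ι : Type*} (s : Finset ι) {B : ι → Set Ω}
    (hB : ∀ i ∈ s, MeasurableSet (B i)) :
    Integrable (fun ω => ∑ i ∈ s, (B i).indicator (1 : Ω → ℝ) ω) μ :=
  integrable_finsetSum s fun i hi => (integrable_const (1 : ℝ)).indicator (hB i hi)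

theorem integral_sum_indicator_one {ι : Type*} (s : Finset ι) {B : ι → Set Ω}
    (hB : ∀ i ∈ s, MeasurableSet (B i)) :
    ∫ ω, ∑ i ∈ s, (B i).indicator 1 ω ∂μ = ∑ i ∈ s, μ.real (B i) := by
  rw [integral_finsetSum s (f := fun i => (B i).indicator 1) fun i hi =>
    (integrable_const (1 : ℝ)).indicator (hB i hi)]
  exact sum_congr rfl fun i hi => integral_indicator_one (hB i hi)

theorem sum_measureReal_sub_pairs_le {n : ℕ} {A : Fin n → Set Ω}
    (hA : ∀ i, MeasurableSet (A i)) :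
    ∑ i, μ.real (A i) - 2 / (n : ℝ) * ∑ i, ∑ j ∈ univ.filter (fun j => i < j), μ.real (A i ∩ A j)
      ≤ ⌈(n : ℝ) / 2⌉₊ * μ.real (⋃ i, A i) := by
  have hsingles := integrable_sum_indicator_one μ univ fun i _ => hA i
  have hpairs : Integrable (fun ω => ∑ i, ∑ j ∈ univ.filter (fun j => i < j),
      (A i ∩ A j).indicator (1 : Ω → ℝ) ω) μ :=
    integrable_finsetSum _ fun i _ =>
      integrable_sum_indicator_one μ _ fun j _ => (hA i).inter (hA j)
  have hunion := (integrable_const (1 : ℝ)).indicator (MeasurableSet.iUnion hA) (μ := μ)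
  calc _ = ∫ ω, (∑ i, (A i).indicator 1 ω - 2 / (n : ℝ) *
          ∑ i, ∑ j ∈ univ.filter (fun j => i < j), (A i ∩ A j).indicator 1 ω) ∂μ := by
        rw [integral_sub hsingles (hpairs.const_mul _), integral_const_mul,
          integral_sum_indicator_one μ univ fun i _ => hA i,
          integral_finsetSum _ fun i _ =>
            integrable_sum_indicator_one μ _ fun j _ => (hA i).inter (hA j)]
        simp_rw [integral_sum_indicator_one μ _ fun j _ => (hA _).inter (hA j)]
    _ ≤ ∫ ω, (⌈(n : ℝ) / 2⌉₊ : ℝ) * (⋃ i, A i).indicator 1 ω ∂μ :=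
        integral_mono (hsingles.sub (hpairs.const_mul _)) (hunion.const_mul _)
          (sum_indicator_sub_pairs_le A)
    _ = _ := by rw [integral_const_mul, integral_indicator_one (MeasurableSet.iUnion hA)]

end

theorem kwerel_lower_analogue_general {Ω : Type*} [MeasurableSpace Ω]
    (μ : Measure Ω) [IsProbabilityMeasure μ] (n : ℕ)
    (A : Fin n → Set Ω) (hA : ∀ i, MeasurableSet (A i)) :
    (μ (⋃ i, A i)).toReal ≥
      (1 / (⌈(n : ℝ) / 2⌉₊ : ℝ)) *
        (∑ i, (μ (A i)).toReal -
          (2 / (n : ℝ)) *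
            ∑ i, ∑ j ∈ univ.filter (fun j => i < j), (μ (A i ∩ A j)).toReal) := by
  rw [ge_iff_le, one_div_mul_eq_div]
  exact div_le_of_le_mul₀ (Nat.cast_nonneg _) measureReal_nonneg
    ((sum_measureReal_sub_pairs_le μ hA).trans_eq (mul_comm _ _))

theorem kwerel_lower_analogue {Ω : Type*} [MeasurableSpace Ω]
    (μ : Measure Ω) [IsProbabilityMeasure μ] (n : ℕ) (hn : 1 ≤ n)
    (A : Fin n → Set Ω) (hA : ∀ i, MeasurableSet (A i)) :
    (μ (⋃ i, A i)).toReal ≥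
      (1 / (⌈(n : ℝ) / 2⌉₊ : ℝ)) *
        (∑ i, (μ (A i)).toReal -
          (2 / (n : ℝ)) *
            ∑ i, ∑ j ∈ univ.filter (fun j => i < j), (μ (A i ∩ A j)).toReal) :=
  kwerel_lower_analogue_general μ n A hA
end

section
/- Let A_1, …, A_n be events in a probability space and let j, k ∈ {1, …, n} with n > 2 − δ_{jk}, where δ_{jk} is the Kronecker delta. Then Pr(⋃_{i=1}^n A_i) ≥ (1/(n−2+δ_{jk})) · ( Σ_{i=1}^n Pr(A_i) − Σ_{i≠j} Pr(A_i ∩ A_j) − Σ_{i≠j,k} Pr(A_i ∩ A_k) + Σ_{i≠j,k} Pr(A_i ∩ A_j ∩ A_k) ), where all sums over i range over {1, …, n} with the indicated exclusions. -/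
open MeasureTheory Finset

lemma seneta_aux {Ω : Type*} [MeasurableSpace Ω] (μ : Measure Ω) [IsProbabilityMeasure μ]
    {n : ℕ} (A : Fin n → Set Ω) (U B : Set Ω) (hBm : MeasurableSet B) (hBU : B ⊆ U)
    (s : Finset (Fin n)) (hAU : ∀ i, A i ⊆ U) (c : ℝ) (hc : 1 ≤ c) (hcard : (s.card : ℝ) ≤ c) :
    (μ B).toReal + ∑ i ∈ s, (μ (A i \ B)).toReal ≤ c * (μ U).toReal := by
  have hfin : ∀ t : Set Ω, μ t ≠ ⊤ := fun t => measure_ne_top μ t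
  have hterm : ∀ i ∈ s, (μ (A i \ B)).toReal ≤ (μ (U \ B)).toReal := by
    intro i _
    exact ENNReal.toReal_mono (hfin _) (measure_mono (Set.diff_subset_diff_left (hAU i)))
  have hsum : ∑ i ∈ s, (μ (A i \ B)).toReal ≤ (s.card : ℝ) * (μ (U \ B)).toReal := by
    calc ∑ i ∈ s, (μ (A i \ B)).toReal ≤ ∑ _i ∈ s, (μ (U \ B)).toReal :=
          Finset.sum_le_sum hterm
      _ = (s.card : ℝ) * (μ (U \ B)).toReal := by rw [Finset.sum_const, nsmul_eq_mul]
  have hsumc : ∑ i ∈ s, (μ (A i \ B)).toReal ≤ c * (μ (U \ B)).toReal := by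
    have := mul_le_mul_of_nonneg_right hcard (ENNReal.toReal_nonneg (a := μ (U \ B)))
    linarith
  have hUeq : (μ U).toReal = (μ B).toReal + (μ (U \ B)).toReal := by
    rw [← ENNReal.toReal_add (hfin _) (hfin _)]
    congr 1
    rw [← measure_inter_add_diff U hBm, Set.inter_eq_self_of_subset_right hBU]
  have h1 : (0:ℝ) ≤ (μ B).toReal := ENNReal.toReal_nonneg
  nlinarith [hsumc, hUeq, h1, hc]

theorem seneta_lower_analogue {Ω : Type*} [MeasurableSpace Ω]
    (μ : Measure Ω) [IsProbabilityMeasure μ] (n : ℕ)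
    (A : Fin n → Set Ω) (hA : ∀ i, MeasurableSet (A i)) (j k : Fin n)
    (hn : 2 - (if j = k then 1 else 0) < n) :
    (μ (⋃ i, A i)).toReal ≥
      (1 / ((n : ℝ) - 2 + (if j = k then 1 else 0))) *
        (∑ i, (μ (A i)).toReal -
          (∑ i ∈ univ.filter (fun i => i ≠ j), (μ (A i ∩ A j)).toReal) -
          (∑ i ∈ univ.filter (fun i => i ≠ j ∧ i ≠ k), (μ (A i ∩ A k)).toReal) +
          ∑ i ∈ univ.filter (fun i => i ≠ j ∧ i ≠ k), (μ (A i ∩ A j ∩ A k)).toReal) := by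
  have hfin : ∀ s : Set Ω, μ s ≠ ⊤ := fun s => measure_ne_top μ s
  have hsplit : ∀ s t : Set Ω, MeasurableSet t →
      (μ s).toReal = (μ (s ∩ t)).toReal + (μ (s \ t)).toReal := by
    intro s t ht
    rw [← ENNReal.toReal_add (hfin _) (hfin _), measure_inter_add_diff s ht]
  set U := ⋃ i, A i with hU
  have hUm : MeasurableSet U := MeasurableSet.iUnion hA
  have hAU : ∀ i, A i ⊆ U := fun i => Set.subset_iUnion A i
  by_cases hjk : j = k
  · -- case j = k
    subst hjk
    rw [if_pos rfl] at hn ⊢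
    have hn2 : 2 ≤ n := by omega
    have hc1 : (1:ℝ) ≤ (n:ℝ) - 2 + 1 := by
      have : (2:ℝ) ≤ (n:ℝ) := by exact_mod_cast hn2
      linarith
    have hcpos : (0:ℝ) < (n:ℝ) - 2 + 1 := by linarith
    have hInter : ∀ i : Fin n, A i ∩ A j ∩ A j = A i ∩ A j := fun i => by
      rw [Set.inter_assoc, Set.inter_self]
    simp only [ne_eq, and_self, hInter]
    rw [ge_iff_le, one_div, inv_mul_eq_div, div_le_iff₀ hcpos]
    have hcancel : ∀ a b : ℝ, a - b - b + b = a - b := fun a b => by ring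
    rw [hcancel]
    -- express expression as μ(A j) + sum of diffs
    have hkey : ∑ i, (μ (A i)).toReal -
        ∑ i ∈ univ.filter (fun i => ¬ i = j), (μ (A i ∩ A j)).toReal
        = (μ (A j)).toReal + ∑ i ∈ univ.filter (fun i => ¬ i = j), (μ (A i \ A j)).toReal := by
      have hsplit2 : ∑ i, (μ (A i)).toReal
          = ∑ i, ((μ (A i ∩ A j)).toReal + (μ (A i \ A j)).toReal) :=
        Finset.sum_congr rfl (fun i _ => hsplit (A i) (A j) (hA j))
      rw [hsplit2, Finset.sum_add_distrib]
      have herase : (univ.filter (fun i => ¬ i = j)) = univ.erase j := by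
        ext i; simp [Finset.mem_erase]
      rw [herase]
      have h1 : ∑ i ∈ univ.erase j, (μ (A i ∩ A j)).toReal + (μ (A j ∩ A j)).toReal
          = ∑ i, (μ (A i ∩ A j)).toReal := Finset.sum_erase_add _ _ (Finset.mem_univ j)
      have h2 : ∑ i ∈ univ.erase j, (μ (A i \ A j)).toReal + (μ (A j \ A j)).toReal
          = ∑ i, (μ (A i \ A j)).toReal := Finset.sum_erase_add _ _ (Finset.mem_univ j)
      rw [Set.inter_self] at h1
      rw [Set.diff_self] at h2
      simp only [measure_empty, ENNReal.toReal_zero, add_zero] at h2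
      linarith
    rw [hkey]
    -- apply aux with B = A j, s = univ.erase j
    have herase : (univ.filter (fun i => ¬ i = j)) = univ.erase j := by
      ext i; simp [Finset.mem_erase]
    rw [herase]
    have hcard : ((univ.erase j).card : ℝ) ≤ (n:ℝ) - 2 + 1 := by
      rw [Finset.card_erase_of_mem (Finset.mem_univ j), Finset.card_univ, Fintype.card_fin]
      have : ((n - 1 : ℕ) : ℝ) = (n:ℝ) - 1 := by
        have : (1:ℕ) ≤ n := by omega
        push_cast [Nat.cast_sub this]
        ring
      rw [this]; linarith
    have := seneta_aux μ A U (A j) (hA j) (hAU j) (univ.erase j) hAU ((n:ℝ) - 2 + 1) hc1 hcard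
    linarith [this]
  · -- case j ≠ k
    rw [if_neg hjk] at hn ⊢
    have hn3 : 3 ≤ n := by omega
    have hnR : (3:ℝ) ≤ (n:ℝ) := by exact_mod_cast hn3
    have hc1 : (1:ℝ) ≤ (n:ℝ) - 2 + 0 := by linarith
    have hcpos : (0:ℝ) < (n:ℝ) - 2 + 0 := by linarith
    rw [ge_iff_le, one_div, inv_mul_eq_div, div_le_iff₀ hcpos]
    set B := A j ∪ A k with hB
    have hBm : MeasurableSet B := (hA j).union (hA k)
    have hBU : B ⊆ U := Set.union_subset (hAU j) (hAU k)
    set T := univ.filter (fun i : Fin n => ¬ i = j ∧ ¬ i = k) with hT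
    -- per-element identity
    have hper : ∀ i : Fin n, (μ (A i)).toReal - (μ (A i ∩ A j)).toReal
        - (μ (A i ∩ A k)).toReal + (μ (A i ∩ A j ∩ A k)).toReal = (μ (A i \ B)).toReal := by
      intro i
      have h1 := hsplit (A i) B hBm
      have h2 : μ ((A i ∩ A j) ∪ (A i ∩ A k)) + μ ((A i ∩ A j) ∩ (A i ∩ A k))
          = μ (A i ∩ A j) + μ (A i ∩ A k) := measure_union_add_inter _ ((hA i).inter (hA k))
      have e1 : (A i ∩ A j) ∪ (A i ∩ A k) = A i ∩ B := (Set.inter_union_distrib_left _ _ _).symm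
      have e2 : (A i ∩ A j) ∩ (A i ∩ A k) = A i ∩ A j ∩ A k := by
        ext x; simp [and_assoc]; tauto
      rw [e1, e2] at h2
      have h2' : (μ (A i ∩ B)).toReal + (μ (A i ∩ A j ∩ A k)).toReal
          = (μ (A i ∩ A j)).toReal + (μ (A i ∩ A k)).toReal := by
        have := congrArg ENNReal.toReal h2
        rw [ENNReal.toReal_add (hfin _) (hfin _), ENNReal.toReal_add (hfin _) (hfin _)] at this
        linarith
      linarith
    -- decompose total sum
    have hS1 : ∑ i, (μ (A i)).toReal
        = ((μ (A j)).toReal + (μ (A k)).toReal) + ∑ i ∈ T, (μ (A i)).toReal := by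
      rw [← Finset.sum_filter_add_sum_filter_not univ (fun i : Fin n => ¬ i = j ∧ ¬ i = k)]
      have hjkset : univ.filter (fun i : Fin n => ¬(¬ i = j ∧ ¬ i = k)) = {j, k} := by
        ext i
        simp [not_and_or, Finset.mem_insert]
        tauto
      rw [hjkset, Finset.sum_pair hjk]
      ring
    have hS2 : ∑ i ∈ univ.filter (fun i => ¬ i = j), (μ (A i ∩ A j)).toReal
        = (μ (A k ∩ A j)).toReal + ∑ i ∈ T, (μ (A i ∩ A j)).toReal := by
      rw [← Finset.sum_filter_add_sum_filter_not (univ.filter (fun i : Fin n => ¬ i = j))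
        (fun i : Fin n => ¬ i = k), Finset.filter_filter, Finset.filter_filter]
      have hTeq : univ.filter (fun i : Fin n => ¬ i = j ∧ ¬ i = k) = T := rfl
      have hkset : univ.filter (fun i : Fin n => ¬ i = j ∧ ¬¬ i = k) = {k} := by
        ext i
        simp
        intro h; subst h; exact fun h => hjk h.symm
      rw [hTeq, hkset, Finset.sum_singleton]
      ring
    -- combine sums over T
    have hTsum : ∑ i ∈ T, (μ (A i)).toReal - ∑ i ∈ T, (μ (A i ∩ A j)).toReal
        - ∑ i ∈ T, (μ (A i ∩ A k)).toReal + ∑ i ∈ T, (μ (A i ∩ A j ∩ A k)).toReal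
        = ∑ i ∈ T, (μ (A i \ B)).toReal := by
      rw [← Finset.sum_sub_distrib, ← Finset.sum_sub_distrib, ← Finset.sum_add_distrib]
      exact Finset.sum_congr rfl (fun i _ => hper i)
    have hBeq : (μ (A j)).toReal + (μ (A k)).toReal - (μ (A k ∩ A j)).toReal
        = (μ B).toReal := by
      have h2 : μ (A j ∪ A k) + μ (A j ∩ A k) = μ (A j) + μ (A k) :=
        measure_union_add_inter _ (hA k)
      have := congrArg ENNReal.toReal h2
      rw [ENNReal.toReal_add (hfin _) (hfin _), ENNReal.toReal_add (hfin _) (hfin _)] at this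
      rw [Set.inter_comm]
      rw [hB]
      linarith
    have hcard : ((T.card : ℕ) : ℝ) ≤ (n:ℝ) - 2 + 0 := by
      have hTeq : T = (univ.erase j).erase k := by
        ext i
        simp [hT, Finset.mem_erase, and_comm]
      rw [hTeq, Finset.card_erase_of_mem, Finset.card_erase_of_mem (Finset.mem_univ j),
        Finset.card_univ, Fintype.card_fin]
      · have : ((n - 1 - 1 : ℕ) : ℝ) = (n:ℝ) - 2 := by
          have h1 : (2:ℕ) ≤ n := by omega
          have h2 : n - 1 - 1 = n - 2 := by omega
          rw [h2, Nat.cast_sub h1]; norm_num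
        rw [this]; linarith
      · exact Finset.mem_erase.mpr ⟨fun h => hjk h.symm, Finset.mem_univ k⟩
    have haux := seneta_aux μ A U B hBm hBU T hAU ((n:ℝ) - 2 + 0) hc1 hcard
    simp only [ne_eq]
    rw [hS1, hS2]
    linarith [hTsum, hBeq, haux]
end

section
/- Let A_1, …, A_n be events in a probability space and let m be an integer with 0 ≤ m ≤ n−1. Then Pr(⋃_{i=1}^n A_i) ≥ (1/(n−m)) · ( Σ_{k=1}^m (−1)^{k−1} · (C(m,k)/C(n,k)) · ((nk − (m+1)(k−1))/(m−k+1)) · Σ_{i_1<⋯<i_k} Pr(A_{i_1} ∩ ⋯ ∩ A_{i_k}) + (−1)^m · ((m+1)/C(n,m)) · Σ_{i_1<⋯<i_{m+1}} Pr(A_{i_1} ∩ ⋯ ∩ A_{i_{m+1}}) ), where C(n,k) denotes the binomial coefficient and the inner sums range over all strictly increasing index tuples from {1, …, n}. -/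
/-!
Method of indicators. If `ν ω` is the number of events `A i` containing `ω`, then
`∑_{|I| = k} Pr (⋂ i ∈ I, A i) = 𝔼 [ν.choose k]` and `Pr (⋃ i, A i) = 𝔼 [𝟙 (ν ≥ 1)]`, so a linear
combination `∑ c_k S_k` of the binomial moments is at most `Pr (⋃ i, A i)` as soon as the
polynomial inequality `∑ c_k (t.choose k) ≤ 𝟙 (t ≥ 1)` holds for `0 ≤ t ≤ n`.

For the Galambos–Xu coefficients, `(n - m)² (n.choose m) ∑ c_k (t.choose k)` evaluates, through
the alternating Vandermonde identity
`∑ (-1)^k (t.choose k) ((n - k).choose (j - k)) = (n - t).choose j`, to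
`(n - m - 1) t ((n - t).choose m) + (m + 1) (n.choose (m + 1) - (n - t).choose (m + 1))`.
Since `t ((n - t).choose m) ≤ (n - m) (n.choose m) = (m + 1) (n.choose (m + 1))`, this is at most
`(n - m)² (n.choose m)`.
-/

open MeasureTheory Finset

theorem Finset.sum_Icc_one_eq_sum_range {M : Type*} [AddCommMonoid M] (f : ℕ → M) (j : ℕ) :
    ∑ k ∈ Icc 1 j, f k = ∑ k ∈ range j, f (k + 1) := by
  rw [range_eq_Ico, sum_Ico_add', ← Ico_add_one_right_eq_Icc, zero_add]

namespace Nat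

section AlternatingVandermonde

variable {R : Type*} [CommRing R]

theorem sum_range_neg_one_pow_mul_choose_mul_choose_sub (t n j : ℕ) (ht : t ≤ n) :
    ∑ k ∈ range (j + 1), (-1 : R) ^ k * t.choose k * (n - k).choose (j - k) =
      (n - t).choose j := by
  induction t generalizing n j with
  | zero => simp [sum_range_succ', choose_zero_succ]
  | succ t ih =>
    obtain ⟨n, rfl⟩ : ∃ n', n = n' + 1 := ⟨n - 1, by omega⟩
    cases j with
    | zero => simp
    | succ j =>
      have hsame := ih (n + 1) (j + 1) (by omega)
      have hshift := ih n j (by omega)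
      rw [sum_range_succ'] at hsame ⊢
      simp only [choose_succ_succ', Nat.add_sub_add_right, cast_add, pow_succ, choose_zero_right,
        Nat.sub_zero] at hsame ⊢
      rw [show n + 1 - t = n - t + 1 by omega, choose_succ_succ', cast_add, ← hshift] at hsame
      simp only [mul_neg_one, neg_mul, mul_add, add_mul, sum_add_distrib, sum_neg_distrib]
        at hsame ⊢
      linear_combination hsame

theorem sum_Icc_neg_one_pow_mul_choose_mul_choose_sub (t n j : ℕ) (ht : t ≤ n) :
    ∑ k ∈ Icc 1 j, (-1 : R) ^ (k - 1) * t.choose k * (n - k).choose (j - k) =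
      n.choose j - (n - t).choose j := by
  rw [← sum_range_neg_one_pow_mul_choose_mul_choose_sub t n j ht, sum_range_succ',
    sum_Icc_one_eq_sum_range]
  simp [pow_succ]

theorem sum_Icc_neg_one_pow_mul_mul_choose_mul_choose_sub (t n j : ℕ) (ht : t ≤ n) :
    ∑ k ∈ Icc 1 (j + 1), (-1 : R) ^ (k - 1) * k * t.choose k * (n - k).choose (j + 1 - k) =
      t * (n - t).choose j := by
  cases t with
  | zero => simp [sum_Icc_one_eq_sum_range]
  | succ t =>
    rw [show n - (t + 1) = n - 1 - t by omega,
      ← sum_range_neg_one_pow_mul_choose_mul_choose_sub t (n - 1) j (by omega), mul_sum,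
      sum_Icc_one_eq_sum_range]
    refine sum_congr rfl fun k _ ↦ ?_
    rw [Nat.add_sub_cancel, Nat.add_sub_add_right, show n - (k + 1) = n - 1 - k by omega]
    have hpull : ((k + 1 : ℕ) : R) * (t + 1).choose (k + 1) = (t + 1 : ℕ) * t.choose k := by
      rw [← cast_mul, ← cast_mul, mul_comm, ← add_one_mul_choose_eq]
    linear_combination (-1 : R) ^ k * (n - 1 - k).choose (j - k) * hpull

end AlternatingVandermonde

theorem mul_choose_sub_le (t n m : ℕ) (ht : t ≤ n) :
    t * (n - t).choose m ≤ (n - m) * n.choose m := by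
  rcases lt_or_ge (n - t) m with h | h
  · simp [choose_eq_zero_of_lt h]
  · exact Nat.mul_le_mul (by omega) (choose_le_choose m (by omega))

theorem choose_mul_sub_mul_choose (k m n : ℕ) (hk : k ≤ m) :
    m.choose k * ((n - m) * n.choose m) =
      (n - k).choose (m + 1 - k) * (n.choose k * (m - k + 1)) := by
  have hsucc := choose_succ_right_eq (n - k) (m - k)
  rw [show n - k - (m - k) = n - m by omega] at hsucc
  calc m.choose k * ((n - m) * n.choose m) = n.choose m * m.choose k * (n - m) := by ring
    _ = n.choose k * ((n - k).choose (m - k) * (n - m)) := by rw [choose_mul hk]; ring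
    _ = _ := by rw [← hsucc, show m + 1 - k = m - k + 1 by omega]; ring

theorem cast_choose_div_choose_div {K : Type*} [Field K] [CharZero K] (k m n : ℕ) (hk : k ≤ m)
    (hm : m < n) :
    (m.choose k : K) / n.choose k / (m - k + 1) =
      (n - k).choose (m + 1 - k) / ((n - m) * n.choose m) := by
  have hnk : (n.choose k : K) ≠ 0 := cast_ne_zero.2 (choose_pos (by omega)).ne'
  have hnm : (n.choose m : K) ≠ 0 := cast_ne_zero.2 (choose_pos hm.le).ne'
  have hmk : (m : K) - k + 1 ≠ 0 := by
    rw [← cast_sub hk]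
    exact_mod_cast succ_ne_zero (m - k)
  have hmn : (n : K) - m ≠ 0 := sub_ne_zero.2 (cast_injective.ne hm.ne')
  rw [div_div, div_eq_div_iff (mul_ne_zero hnk hmk) (mul_ne_zero hmn hnm)]
  have := congrArg (Nat.cast (R := K)) (choose_mul_sub_mul_choose k m n hk)
  push_cast [cast_sub hk, cast_sub hm.le] at this
  linear_combination this

end Nat

namespace MeasureTheory

variable {Ω ι : Type*} [Fintype ι]

open Classical in
noncomputable def occurrenceCount (A : ι → Set Ω) (ω : Ω) : ℕ := #{i | ω ∈ A i}

theorem sum_indicator_biInter_powersetCard (A : ι → Set Ω) (k : ℕ) (ω : Ω) :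
    ∑ I ∈ powersetCard k univ, (⋂ i ∈ I, A i).indicator (1 : Ω → ℝ) ω =
      (occurrenceCount A ω).choose k := by
  classical
  have hfilter : {I ∈ powersetCard k (univ : Finset ι) | ∀ i ∈ I, ω ∈ A i} =
      powersetCard k {i | ω ∈ A i} := by
    ext I
    simp [mem_powersetCard, subset_iff, and_comm]
  simp only [Set.indicator_apply, Set.mem_iInter, Pi.one_apply]
  rw [sum_boole, hfilter, card_powersetCard]
  rfl

theorem occurrenceCount_eq_zero_iff {A : ι → Set Ω} {ω : Ω} :
    occurrenceCount A ω = 0 ↔ ω ∉ ⋃ i, A i := by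
  classical
  simp [occurrenceCount, filter_eq_empty_iff]

theorem occurrenceCount_le_card (A : ι → Set Ω) (ω : Ω) :
    occurrenceCount A ω ≤ Fintype.card ι := by
  classical
  exact card_filter_le _ _

variable [MeasurableSpace Ω] {μ : Measure Ω} [IsFiniteMeasure μ] {A : ι → Set Ω}

theorem integrable_choose_occurrenceCount (hA : ∀ i, MeasurableSet (A i)) (k : ℕ) :
    Integrable (fun ω ↦ ((occurrenceCount A ω).choose k : ℝ)) μ := by
  simp_rw [← sum_indicator_biInter_powersetCard]
  exact integrable_finsetSum _ fun I _ ↦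
    (integrable_const 1).indicator (I.measurableSet_biInter fun i _ ↦ hA i)

theorem integral_choose_occurrenceCount (hA : ∀ i, MeasurableSet (A i)) (k : ℕ) :
    ∫ ω, ((occurrenceCount A ω).choose k : ℝ) ∂μ =
      ∑ I ∈ powersetCard k univ, μ.real (⋂ i ∈ I, A i) := by
  have hI (I : Finset ι) : MeasurableSet (⋂ i ∈ I, A i) := I.measurableSet_biInter fun i _ ↦ hA i
  simp_rw [← sum_indicator_biInter_powersetCard]
  rw [integral_finsetSum _ fun I _ ↦ (integrable_const 1).indicator (hI I)]
  exact sum_congr rfl fun I _ ↦ integral_indicator_one (hI I)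

theorem sum_mul_sum_measureReal_biInter_le_measureReal_iUnion (hA : ∀ i, MeasurableSet (A i))
    (K : Finset ℕ) (c : ℕ → ℝ) (h0 : ∑ k ∈ K, c k * (Nat.choose 0 k) ≤ 0)
    (h1 : ∀ t, 0 < t → t ≤ Fintype.card ι → ∑ k ∈ K, c k * t.choose k ≤ 1) :
    ∑ k ∈ K, c k * ∑ I ∈ powersetCard k univ, μ.real (⋂ i ∈ I, A i) ≤ μ.real (⋃ i, A i) := by
  have hint (k : ℕ) := (integrable_choose_occurrenceCount (μ := μ) hA k).const_mul (c k)
  simp_rw [← integral_choose_occurrenceCount hA, ← integral_const_mul]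
  rw [← integral_finsetSum _ fun k _ ↦ hint k, ← integral_indicator_one (MeasurableSet.iUnion hA)]
  refine integral_mono (integrable_finsetSum _ fun k _ ↦ hint k)
    ((integrable_const 1).indicator (MeasurableSet.iUnion hA)) fun ω ↦ ?_
  by_cases hω : ω ∈ ⋃ i, A i
  · rw [Set.indicator_of_mem hω]
    exact h1 _ (Nat.pos_of_ne_zero fun h ↦ occurrenceCount_eq_zero_iff.1 h hω)
      (occurrenceCount_le_card A ω)
  · rw [Set.indicator_of_notMem hω, occurrenceCount_eq_zero_iff.2 hω]
    exact h0

end MeasureTheory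

/-- `(n - m) * n.choose m` times the coefficient of the `k`-th binomial moment in the
Galambos–Xu bound, for `1 ≤ k ≤ m + 1`; note `n k - (m + 1) (k - 1) = k (n - m - 1) + (m + 1)`. -/
noncomputable def galambosXuWeight (n m k : ℕ) : ℝ :=
  (-1) ^ (k - 1) * (n - k).choose (m + 1 - k) * (k * ((n : ℝ) - m - 1) + (m + 1))

theorem sum_galambosXuWeight_mul_choose (n m t : ℕ) (ht : t ≤ n) :
    ∑ k ∈ Icc 1 (m + 1), galambosXuWeight n m k * t.choose k =
      ((n : ℝ) - m - 1) * (t * (n - t).choose m) +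
        (m + 1) * (n.choose (m + 1) - (n - t).choose (m + 1)) := by
  rw [← Nat.sum_Icc_neg_one_pow_mul_mul_choose_mul_choose_sub t n m ht,
    ← Nat.sum_Icc_neg_one_pow_mul_choose_mul_choose_sub t n (m + 1) ht, mul_sum, mul_sum,
    ← sum_add_distrib]
  refine sum_congr rfl fun k _ ↦ ?_
  unfold galambosXuWeight
  ring

theorem sum_galambosXuWeight_mul_choose_le (n m t : ℕ) (hm : m + 1 ≤ n) (ht : t ≤ n) :
    ∑ k ∈ Icc 1 (m + 1), galambosXuWeight n m k * t.choose k ≤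
      ((n : ℝ) - m) ^ 2 * n.choose m := by
  have hcount : (t : ℝ) * (n - t).choose m ≤ ((n : ℝ) - m) * n.choose m := by
    have := Nat.cast_le (α := ℝ).2 (Nat.mul_choose_sub_le t n m ht)
    push_cast [Nat.cast_sub (by omega : m ≤ n)] at this
    exact this
  have hpascal : ((m : ℝ) + 1) * n.choose (m + 1) = ((n : ℝ) - m) * n.choose m := by
    have := congrArg (Nat.cast (R := ℝ)) (Nat.choose_succ_right_eq n m)
    push_cast [Nat.cast_sub (by omega : m ≤ n)] at this
    linear_combination this
  have hgap : (0 : ℝ) ≤ n - m - 1 := by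
    have : ((m + 1 : ℕ) : ℝ) ≤ n := by exact_mod_cast hm
    push_cast at this
    linarith
  rw [sum_galambosXuWeight_mul_choose n m t ht]
  nlinarith [mul_le_mul_of_nonneg_left hcount hgap, ((n - t).choose (m + 1)).cast_nonneg (α := ℝ)]

theorem galambosXu_combination_eq_sum_weight (n m : ℕ) (hm : m + 1 ≤ n) (S : ℕ → ℝ) :
    (1 / ((n : ℝ) - m)) *
        ((∑ k ∈ Icc 1 m, (-1 : ℝ) ^ (k - 1) *
            ((m.choose k : ℝ) / (n.choose k : ℝ)) *
            (((n : ℝ) * k - (m + 1) * (k - 1)) / ((m : ℝ) - k + 1)) * S k) +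
          (-1 : ℝ) ^ m * (((m : ℝ) + 1) / (n.choose m : ℝ)) * S (m + 1)) =
      ∑ k ∈ Icc 1 (m + 1), galambosXuWeight n m k / (((n : ℝ) - m) ^ 2 * n.choose m) * S k := by
  have hnm : (0 : ℝ) < n - m := by
    have : (m : ℝ) < n := by exact_mod_cast hm
    linarith
  have hchoose : (0 : ℝ) < n.choose m := by exact_mod_cast Nat.choose_pos (by omega)
  rw [sum_Icc_succ_top (by omega), mul_add, mul_sum]
  congr 1
  · refine sum_congr rfl fun k hk ↦ ?_
    have hkm := (mem_Icc.1 hk).2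
    have hpos : (0 : ℝ) < m - k + 1 := by
      have : (k : ℝ) ≤ m := by exact_mod_cast hkm
      linarith
    have hratio := Nat.cast_choose_div_choose_div (K := ℝ) k m n hkm hm
    rw [div_eq_iff hpos.ne'] at hratio
    rw [hratio]
    unfold galambosXuWeight
    field_simp
    ring
  · unfold galambosXuWeight
    simp only [Nat.add_sub_cancel, Nat.sub_self, Nat.choose_zero_right]
    field_simp
    push_cast
    ring

theorem galambos_xu_lower_analogue {Ω : Type*} [MeasurableSpace Ω]
    (μ : Measure Ω) [IsProbabilityMeasure μ] (n m : ℕ) (hm : m + 1 ≤ n)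
    (A : Fin n → Set Ω) (hA : ∀ i, MeasurableSet (A i)) :
    (μ (⋃ i, A i)).toReal ≥
      (1 / ((n : ℝ) - m)) *
        ((∑ k ∈ Icc 1 m, (-1 : ℝ) ^ (k - 1) *
            ((m.choose k : ℝ) / (n.choose k : ℝ)) *
            (((n : ℝ) * k - (m + 1) * (k - 1)) / ((m : ℝ) - k + 1)) *
            ∑ I ∈ powersetCard k (univ : Finset (Fin n)), (μ (⋂ i ∈ I, A i)).toReal) +
          (-1 : ℝ) ^ m * (((m : ℝ) + 1) / (n.choose m : ℝ)) *
            ∑ I ∈ powersetCard (m + 1) (univ : Finset (Fin n)),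
              (μ (⋂ i ∈ I, A i)).toReal) := by
  have hD : 0 < ((n : ℝ) - m) ^ 2 * n.choose m := by
    have : (m : ℝ) < n := by exact_mod_cast hm
    have := Nat.choose_pos (Nat.le_of_succ_le hm)
    positivity
  rw [ge_iff_le, galambosXu_combination_eq_sum_weight n m hm]
  refine sum_mul_sum_measureReal_biInter_le_measureReal_iUnion hA _ _
    (by simp [sum_Icc_one_eq_sum_range]) fun t _ ht ↦ ?_
  simp_rw [div_mul_eq_mul_div, ← sum_div]
  rw [div_le_one hD]
  exact sum_galambosXuWeight_mul_choose_le n m t hm (by simpa using ht)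
end

section
/- Let {A_v}_{v∈V} be a non-empty finite collection of events in a probability space, where the index set V is the vertex set of a chordal graph G. For each non-empty J ⊆ V, let B_J := ⋂_{i∈J} A_i ∩ ⋂_{i∉J} complement(A_i), and define α'(G) := max{ c(G[J]) : J ⊆ V, J ≠ ∅, B_J ≠ ∅ } (taking the maximum over the nonempty set of such J when it exists), where G[J] is the subgraph of G induced by J and c denotes the number of connected components. Then Pr(⋃_{v∈V} A_v) ≥ (1/α'(G)) · Σ_{I∈𝒞(G)} (−1)^{|I|−1} · Pr(⋂_{i∈I} A_i). -/
/-!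
For a chordal graph `G` and a vertex set `J`, the alternating count of the non-empty cliques
inside `J` (the Euler characteristic of the clique complex of `G[J]`) equals the number of
connected components of `G[J]`. Both quantities `f` satisfy `f J + f (N(v) ∩ J - v) = f (J - v) + 1`
for `v ∈ J`: for cliques, split according to whether `v` belongs to the clique; for components,
chordality guarantees that two neighbours of `v` joined in `G[J - v]` are already joined through
neighbours of `v`.

Splitting every event into the atoms `B_J`, the clique sum becomes
`∑_J c(G[J]) Pr(B_J)`, where only the `J ≠ ∅` with `B_J ≠ ∅` contribute, each with a weight
`c(G[J]) ≤ α'(G)`; hence it is at most `α'(G) ∑_{J ≠ ∅} Pr(B_J) = α'(G) Pr(⋃ A_v)`.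
-/

open MeasureTheory Finset
open scoped Classical

/-- A graph is chordal if it contains no induced cycle of length four or greater. -/
def SimpleGraph.IsChordal {V : Type*} (G : SimpleGraph V) : Prop :=
  ∀ n : ℕ, 4 ≤ n → ∀ s : Set V, ¬ Nonempty (G.induce s ≃g SimpleGraph.cycleGraph n)

/-- The clique complex of `G`: the collection of all non-empty cliques of `G`. -/
noncomputable def SimpleGraph.cliqueComplex {V : Type*} [Fintype V] (G : SimpleGraph V) :
    Finset (Finset V) :=
  Finset.univ.powerset.filter fun I => I.Nonempty ∧ G.IsClique (I : Set V)

/-- The independence number of `G`: the maximum size of a set of pairwise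
non-adjacent vertices. -/
noncomputable def SimpleGraph.indepNum' {V : Type*} [Fintype V] (G : SimpleGraph V) : ℕ :=
  sSup {n | ∃ s : Finset V, ((s : Set V).Pairwise fun v w => ¬ G.Adj v w) ∧ s.card = n}

lemma card_add_one_eq_card_add_card_of_bijOn_compl {α β γ : Type*} [Finite α] [Finite β]
    {φ : α → β} {ψ : γ → α} {b : β} (hψ : Function.Injective ψ)
    (hrange : Set.range ψ = φ ⁻¹' {b}) (hφ : Set.BijOn φ (φ ⁻¹' {b})ᶜ {b}ᶜ) :
    Nat.card α + 1 = Nat.card β + Nat.card γ := by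
  rw [← Set.ncard_add_ncard_compl (Set.range ψ), ← Set.ncard_add_ncard_compl {b},
    Set.ncard_range_of_injective hψ, hrange, hφ.ncard_eq, Set.ncard_singleton]
  ring

namespace SimpleGraph

variable {V : Type*} {G : SimpleGraph V}

def ReachableIn (G : SimpleGraph V) (s : Set V) (a b : V) : Prop :=
  ∃ p : G.Walk a b, ∀ x ∈ p.support, x ∈ s

namespace ReachableIn

variable {s t : Set V} {a b c : V}

lemma right_mem (h : G.ReachableIn s a b) : b ∈ s :=
  let ⟨p, hp⟩ := h; hp b p.end_mem_support

lemma refl (ha : a ∈ s) : G.ReachableIn s a a := ⟨.nil, by simpa⟩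

lemma symm (h : G.ReachableIn s a b) : G.ReachableIn s b a :=
  let ⟨p, hp⟩ := h; ⟨p.reverse, by simpa⟩

lemma trans (hab : G.ReachableIn s a b) (hbc : G.ReachableIn s b c) : G.ReachableIn s a c := by
  obtain ⟨p, hp⟩ := hab
  obtain ⟨q, hq⟩ := hbc
  exact ⟨p.append q, fun x hx => (Walk.mem_support_append_iff _ _).1 hx |>.elim (hp x) (hq x)⟩

lemma mono (hst : s ⊆ t) (h : G.ReachableIn s a b) : G.ReachableIn t a b :=
  let ⟨p, hp⟩ := h; ⟨p, fun x hx => hst (hp x hx)⟩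

lemma of_adj (hab : G.Adj a b) (ha : a ∈ s) (hb : b ∈ s) : G.ReachableIn s a b :=
  ⟨hab.toWalk, by simp [ha, hb]⟩

lemma diff_singleton_or (h : G.ReachableIn s a b) (v : V) :
    G.ReachableIn (s \ {v}) a b ∨ G.ReachableIn s a v := by
  obtain ⟨p, hp⟩ := h
  by_cases hv : v ∈ p.support
  · exact .inr ⟨p.takeUntil v hv, fun x hx => hp x (p.support_takeUntil_subset_support hv hx)⟩
  · exact .inl ⟨p, fun x hx => ⟨hp x hx, by rintro rfl; exact hv hx⟩⟩

lemma exists_shortest (h : G.ReachableIn s a b) :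
    ∃ p : G.Walk a b, (∀ x ∈ p.support, x ∈ s) ∧
      ∀ q : G.Walk a b, (∀ x ∈ q.support, x ∈ s) → p.length ≤ q.length := by
  have hex : ∃ n, ∃ p : G.Walk a b, (∀ x ∈ p.support, x ∈ s) ∧ p.length = n :=
    let ⟨p, hp⟩ := h; ⟨_, p, hp, rfl⟩
  obtain ⟨p, hp, hlen⟩ := Nat.find_spec hex
  exact ⟨p, hp, fun q hq => hlen ▸ Nat.find_min' hex ⟨q, hq, rfl⟩⟩

end ReachableIn

lemma reachable_induce_iff_reachableIn {s : Set V} {a b : s} :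
    (G.induce s).Reachable a b ↔ G.ReachableIn s a b := by
  constructor
  · rintro ⟨p⟩
    let q : G.Walk a b := p.map (Embedding.induce s).toHom
    have hq : q.support = p.support.map (↑) := Walk.support_map _ _
    exact ⟨q, by simp +contextual [hq]⟩
  · rintro ⟨p, hp⟩
    exact ⟨p.induce s hp⟩

lemma connectedComponentMk_induce_eq_iff {s : Set V} {a b : V} (ha : a ∈ s) (hb : b ∈ s) :
    (G.induce s).connectedComponentMk ⟨a, ha⟩ = (G.induce s).connectedComponentMk ⟨b, hb⟩ ↔
      G.ReachableIn s a b := by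
  rw [ConnectedComponent.eq, reachable_induce_iff_reachableIn]

namespace Walk

lemma exists_adj_reachableIn_diff_singleton {s : Set V} {a v : V} :
    ∀ p : G.Walk a v, (∀ x ∈ p.support, x ∈ s) → a ≠ v →
      ∃ x, G.Adj x v ∧ G.ReachableIn (s \ {v}) a x
  | .nil, _, hav => absurd rfl hav
  | .cons (v := y) hay p, hp, hav => by
    have ha : a ∈ s \ {v} := ⟨hp a (by simp), hav⟩
    by_cases hyv : y = v
    · subst hyv
      exact ⟨a, hay, .refl ha⟩
    · obtain ⟨x, hxv, hyx⟩ :=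
        p.exists_adj_reachableIn_diff_singleton (fun x hx => hp x (by simp [hx])) hyv
      exact ⟨x, hxv, (ReachableIn.of_adj hay ha ⟨hp y (by simp), hyv⟩).trans hyx⟩

lemma support_take_subset_support {a b : V} (p : G.Walk a b) (n : ℕ) :
    (p.take n).support ⊆ p.support := by
  rw [support_take]
  exact List.take_subset _ _

lemma support_drop_subset_support {a b : V} (p : G.Walk a b) (n : ℕ) :
    (p.drop n).support ⊆ p.support := by
  rw [drop_support_eq_support_drop_min]
  exact List.drop_subset _ _

variable {s : Set V} {a b : V} {p : G.Walk a b}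

lemma isPath_of_forall_length_le (hp : ∀ x ∈ p.support, x ∈ s)
    (hmin : ∀ q : G.Walk a b, (∀ x ∈ q.support, x ∈ s) → p.length ≤ q.length) : p.IsPath := by
  rw [← p.bypass_eq_self_of_length_le_length_bypass
    (hmin _ fun x hx => hp x (p.support_bypass_subset_support hx))]
  exact p.bypass_isPath

lemma not_adj_getVert_of_forall_length_le (hp : ∀ x ∈ p.support, x ∈ s)
    (hmin : ∀ q : G.Walk a b, (∀ x ∈ q.support, x ∈ s) → p.length ≤ q.length)
    {i j : ℕ} (hij : i + 1 < j) (hj : j ≤ p.length) : ¬G.Adj (p.getVert i) (p.getVert j) := by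
  intro h
  let q := (p.take i).append (cons h (p.drop j))
  have hq : ∀ x ∈ q.support, x ∈ s := by
    intro x hx
    simp only [q, mem_support_append_iff, support_cons, List.mem_cons] at hx
    rcases hx with hx | rfl | hx
    · exact hp x (p.support_take_subset_support i hx)
    · exact hp _ (p.getVert_mem_support i)
    · exact hp x (p.support_drop_subset_support j hx)
  have := hmin q hq
  simp only [q, length_append, length_cons, take_length, drop_length] at this
  omega

end Walk

lemma cycleGraph_adj_iff_val {n : ℕ} {x y : Fin (n + 2)} :
    (cycleGraph (n + 2)).Adj x y ↔
      x.val + 1 = y.val ∨ y.val + 1 = x.val ∨ (x.val = 0 ∧ y.val = n + 1) ∨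
        (y.val = 0 ∧ x.val = n + 1) := by
  have hx := x.isLt
  have hy := y.isLt
  rw [cycleGraph_adj']
  rcases lt_trichotomy x y with h | rfl | h
  · rw [Fin.coe_sub_iff_lt.2 h, Fin.sub_val_of_le h.le]
    rw [Fin.lt_def] at h
    omega
  · simp only [sub_self, Fin.val_zero]
    omega
  · rw [Fin.coe_sub_iff_lt.2 h, Fin.sub_val_of_le h.le]
    rw [Fin.lt_def] at h
    omega

theorem cycleGraph_isIndContained_of_isPath {a b v : V} {p : G.Walk a b} (hp : p.IsPath)
    (hchord : ∀ i j, i + 1 < j → j ≤ p.length → ¬G.Adj (p.getVert i) (p.getVert j))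
    (hva : G.Adj v a) (hvb : G.Adj v b)
    (hvint : ∀ i, 0 < i → i < p.length → ¬G.Adj v (p.getVert i)) (hv : v ∉ p.support) :
    cycleGraph (p.length + 2) ⊴ G := by
  set m := p.length
  have hadj_path : ∀ i ≤ m, ∀ j ≤ m,
      G.Adj (p.getVert i) (p.getVert j) ↔ i + 1 = j ∨ j + 1 = i := by
    intro i hi j hj
    refine ⟨fun h => ?_, ?_⟩
    · rcases lt_trichotomy i j with hij | rfl | hij
      · by_contra
        exact hchord i j (by omega) hj h
      · exact absurd h G.irrefl
      · by_contra
        exact hchord j i (by omega) hi h.symm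
    · rintro (rfl | rfl)
      · exact p.adj_getVert_succ (by omega)
      · exact (p.adj_getVert_succ (by omega)).symm
  have hadj_apex : ∀ i ≤ m, G.Adj v (p.getVert i) ↔ i = 0 ∨ i = m := by
    intro i hi
    refine ⟨fun h => ?_, ?_⟩
    · by_contra
      exact hvint i (by omega) (by omega) h
    · rintro (rfl | rfl)
      · simpa using hva
      · simpa [m] using hvb
  let f : Fin (m + 2) → V := fun k => if k.val ≤ m then p.getVert k else v
  have hf : Function.Injective f := by
    intro x y hxy
    simp only [f] at hxy
    split_ifs at hxy with hx hy hy
    · exact Fin.ext (hp.getVert_injOn hx hy hxy)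
    · exact absurd (hxy ▸ p.getVert_mem_support _) hv
    · exact absurd (hxy ▸ p.getVert_mem_support _) hv
    · omega
  refine ⟨⟨⟨f, hf⟩, fun {x y} => ?_⟩⟩
  rw [cycleGraph_adj_iff_val]
  simp only [Function.Embedding.coeFn_mk, f]
  split_ifs with hx hy hy
  · rw [hadj_path _ hx _ hy]
    omega
  · rw [G.adj_comm, hadj_apex _ hx]
    omega
  · rw [hadj_apex _ hy]
    omega
  · simp only [SimpleGraph.irrefl, false_iff]
    omega

lemma IsChordal.not_cycleGraph_isIndContained (hG : G.IsChordal) {n : ℕ} (hn : 4 ≤ n) :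
    ¬cycleGraph n ⊴ G := fun h =>
  let ⟨s, ⟨e⟩⟩ := isIndContained_iff_exists_iso_induce.1 h
  hG n hn s ⟨e.symm⟩

/- A shortest walk in `s` between two neighbours of `v` either passes through another neighbour
of `v`, where it splits into two shorter instances, or closes up with `v` into an induced cycle of
length at least four. -/
theorem IsChordal.reachableIn_sep_adj (hG : G.IsChordal) {s : Set V} {v a b : V} (hv : v ∉ s)
    (ha : G.Adj v a) (hb : G.Adj v b) (h : G.ReachableIn s a b) :
    G.ReachableIn {x ∈ s | G.Adj v x} a b := by
  obtain ⟨p, hp⟩ := h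
  induction hn : p.length using Nat.strong_induction_on generalizing a b with
  | _ n ih =>
  obtain ⟨q, hq, hmin⟩ := ReachableIn.exists_shortest ⟨p, hp⟩
  have hqn : q.length ≤ n := hn ▸ hmin p hp
  by_cases hmid : ∃ i, 0 < i ∧ i < q.length ∧ G.Adj v (q.getVert i)
  · obtain ⟨i, hi0, hiq, hvi⟩ := hmid
    have htake := ih _ (by rw [Walk.take_length]; omega) ha hvi (q.take i)
      (fun x hx => hq x (q.support_take_subset_support i hx)) rfl
    have hdrop := ih _ (by rw [Walk.drop_length]; omega) hvi hb (q.drop i)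
      (fun x hx => hq x (q.support_drop_subset_support i hx)) rfl
    exact htake.trans hdrop
  push Not at hmid
  rcases Nat.lt_or_ge q.length 2 with hlen | hlen
  · interval_cases hl : q.length
    · rw [Walk.eq_of_length_eq_zero hl]
      exact .refl ⟨hq b q.end_mem_support, hb⟩
    · exact .of_adj (Walk.adj_of_length_eq_one hl) ⟨hq a q.start_mem_support, ha⟩
        ⟨hq b q.end_mem_support, hb⟩
  · exact absurd (cycleGraph_isIndContained_of_isPath
      (Walk.isPath_of_forall_length_le hq hmin)
      (fun _ _ => Walk.not_adj_getVert_of_forall_length_le hq hmin) ha hb hmid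
      (fun h => hv (hq v h))) (hG.not_cycleGraph_isIndContained (by omega))

abbrev inducedComponentMap (G : SimpleGraph V) {s t : Set V} (h : s ⊆ t) :
    (G.induce s).ConnectedComponent → (G.induce t).ConnectedComponent :=
  ConnectedComponent.map (G.induceHomOfLE h).toHom

@[simp]
lemma inducedComponentMap_mk {s t : Set V} (h : s ⊆ t) (a : s) :
    G.inducedComponentMap h ((G.induce s).connectedComponentMk a) =
      (G.induce t).connectedComponentMk (Set.inclusion h a) := rfl

section DeleteVertex

variable {t : Set V} {v : V}

lemma range_inducedComponentMap_sep_adj (hv : v ∈ t) :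
    Set.range (G.inducedComponentMap (Set.sep_subset (t \ {v}) (G.Adj v))) =
      G.inducedComponentMap Set.sdiff_subset ⁻¹' {(G.induce t).connectedComponentMk ⟨v, hv⟩} := by
  ext c
  induction c using ConnectedComponent.ind with | h a =>
  obtain ⟨a, ha⟩ := a
  simp only [Set.mem_range, Set.mem_preimage, Set.mem_singleton_iff, inducedComponentMap_mk,
    Set.inclusion_mk, connectedComponentMk_induce_eq_iff]
  constructor
  · rintro ⟨d, hd⟩
    induction d using ConnectedComponent.ind with | h x =>
    obtain ⟨x, hx, hvx⟩ := x
    rw [inducedComponentMap_mk, Set.inclusion_mk, connectedComponentMk_induce_eq_iff] at hd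
    exact (hd.symm.mono Set.sdiff_subset).trans (.of_adj hvx.symm hx.1 hv)
  · rintro ⟨p, hp⟩
    obtain ⟨x, hxv, hax⟩ := p.exists_adj_reachableIn_diff_singleton hp ha.2
    refine ⟨(G.induce _).connectedComponentMk ⟨x, hax.right_mem, hxv.symm⟩, ?_⟩
    rw [inducedComponentMap_mk, Set.inclusion_mk, connectedComponentMk_induce_eq_iff]
    exact hax.symm

lemma bijOn_inducedComponentMap_diff_singleton (hv : v ∈ t) :
    Set.BijOn (G.inducedComponentMap (Set.sdiff_subset : t \ {v} ⊆ t))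
      (G.inducedComponentMap Set.sdiff_subset ⁻¹' {(G.induce t).connectedComponentMk ⟨v, hv⟩})ᶜ
      {(G.induce t).connectedComponentMk ⟨v, hv⟩}ᶜ := by
  refine ⟨fun c hc => hc, fun c hc d _ hcd => ?_, fun c hc => ?_⟩
  · induction c using ConnectedComponent.ind with | h a =>
    induction d using ConnectedComponent.ind with | h b =>
    obtain ⟨a, ha⟩ := a
    obtain ⟨b, hb⟩ := b
    simp only [Set.mem_compl_iff, Set.mem_preimage, Set.mem_singleton_iff, inducedComponentMap_mk,
      Set.inclusion_mk, connectedComponentMk_induce_eq_iff] at hc hcd ⊢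
    exact (hcd.diff_singleton_or v).resolve_right hc
  · induction c using ConnectedComponent.ind with | h a =>
    obtain ⟨a, ha⟩ := a
    have hav : a ≠ v := by
      rintro rfl
      exact hc rfl
    exact ⟨(G.induce _).connectedComponentMk ⟨a, ha, hav⟩, hc, rfl⟩

theorem IsChordal.injective_inducedComponentMap_sep_adj (hG : G.IsChordal) {s : Set V}
    (hv : v ∉ s) : Function.Injective (G.inducedComponentMap (Set.sep_subset s (G.Adj v))) := by
  intro c d hcd
  induction c using ConnectedComponent.ind with | h a =>
  induction d using ConnectedComponent.ind with | h b =>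
  obtain ⟨a, ha, hva⟩ := a
  obtain ⟨b, hb, hvb⟩ := b
  simp only [inducedComponentMap_mk, Set.inclusion_mk, connectedComponentMk_induce_eq_iff] at hcd ⊢
  exact hG.reachableIn_sep_adj hv hva hvb hcd

/- Deleting `v` splits its component into the components of `G[t \ {v}]` that meet `N(v)`;
by chordality these correspond to the components of `G[N(v) ∩ (t \ {v})]`. -/
theorem IsChordal.card_connectedComponent_induce_add (hG : G.IsChordal) [Finite t] (hv : v ∈ t) :
    Nat.card (G.induce t).ConnectedComponent +
        Nat.card (G.induce {x ∈ t \ {v} | G.Adj v x}).ConnectedComponent =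
      Nat.card (G.induce (t \ {v})).ConnectedComponent + 1 :=
  (card_add_one_eq_card_add_card_of_bijOn_compl
    (hG.injective_inducedComponentMap_sep_adj (by simp)) (range_inducedComponentMap_sep_adj hv)
    (bijOn_inducedComponentMap_diff_singleton hv)).symm

end DeleteVertex

noncomputable def cliqueEulerChar (G : SimpleGraph V) (J : Finset V) : ℤ :=
  ∑ I ∈ J.powerset.filter (fun I : Finset V => I.Nonempty ∧ G.IsClique (I : Set V)),
    (-1) ^ (#I - 1)

lemma cliqueEulerChar_eq_one_sub (J : Finset V) :
    G.cliqueEulerChar J =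
      1 - ∑ I ∈ J.powerset.filter (fun I : Finset V => G.IsClique (I : Set V)), (-1) ^ #I := by
  have hterm : ∀ I : Finset V,
      (if I.Nonempty ∧ G.IsClique (I : Set V) then (-1 : ℤ) ^ (#I - 1) else 0) =
        (if I = ∅ then 1 else 0) - if G.IsClique (I : Set V) then (-1) ^ #I else 0 := by
    intro I
    rcases I.eq_empty_or_nonempty with rfl | hI
    · simp
    · obtain ⟨n, hn⟩ := Nat.exists_eq_succ_of_ne_zero (card_ne_zero.2 hI)
      split_ifs <;> simp_all [pow_succ]
  rw [cliqueEulerChar, sum_filter, sum_filter, sum_congr rfl fun I _ => hterm I, sum_sub_distrib,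
    sum_ite_eq' _ _ _, if_pos (empty_mem_powerset J)]

lemma sum_powerset_isClique_insert {J : Finset V} {v : V} (hv : v ∉ J) :
    ∑ I ∈ (insert v J).powerset.filter (fun I : Finset V => G.IsClique (I : Set V)),
        (-1 : ℤ) ^ #I =
      ∑ I ∈ J.powerset.filter (fun I : Finset V => G.IsClique (I : Set V)), (-1) ^ #I -
        ∑ I ∈ (J.filter (G.Adj v)).powerset.filter (fun I : Finset V => G.IsClique (I : Set V)),
          (-1) ^ #I := by
  rw [sum_filter, sum_powerset_insert hv, ← sum_filter, sub_eq_add_neg, ← sum_neg_distrib]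
  congr 1
  have hN : J.powerset.filter (· ⊆ J.filter (G.Adj v)) = (J.filter (G.Adj v)).powerset := by
    ext I
    simp only [mem_filter, mem_powerset, and_iff_right_iff_imp]
    exact fun h => h.trans (filter_subset _ _)
  rw [← hN, sum_filter, sum_filter]
  refine sum_congr rfl fun I hI => ?_
  have hvI : v ∉ I := fun h => hv (mem_powerset.1 hI h)
  have hadj : (∀ b ∈ (I : Set V), v ≠ b → G.Adj v b) ↔ I ⊆ J.filter (G.Adj v) := by
    simp only [mem_coe, subset_iff, mem_filter]
    exact ⟨fun h b hb => ⟨mem_powerset.1 hI hb, h b hb (ne_of_mem_of_not_mem hb hvI).symm⟩,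
      fun h b hb _ => (h hb).2⟩
  simp only [coe_insert, isClique_insert, hadj, card_insert_of_notMem hvI, pow_succ]
  split_ifs <;> simp_all

lemma cliqueEulerChar_empty : G.cliqueEulerChar ∅ = 0 := by
  simp [cliqueEulerChar, filter_singleton]

lemma cliqueEulerChar_add {J : Finset V} {v : V} (hv : v ∈ J) :
    G.cliqueEulerChar J + G.cliqueEulerChar ((J.erase v).filter (G.Adj v)) =
      G.cliqueEulerChar (J.erase v) + 1 := by
  have h := G.sum_powerset_isClique_insert (J.notMem_erase v)
  rw [insert_erase hv] at h
  simp only [cliqueEulerChar_eq_one_sub]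
  linarith

theorem IsChordal.cliqueEulerChar_eq_card_connectedComponent (hG : G.IsChordal) (J : Finset V) :
    G.cliqueEulerChar J = Nat.card (G.induce (J : Set V)).ConnectedComponent := by
  induction J using Finset.strongInduction with
  | H J ih =>
  rcases J.eq_empty_or_nonempty with rfl | ⟨v, hv⟩
  · simp [cliqueEulerChar_empty]
  have hcard := hG.card_connectedComponent_induce_add (t := (J : Set V)) (mem_coe.2 hv)
  have hN : {x ∈ ((J.erase v : Finset V) : Set V) | G.Adj v x} =
      ((J.erase v).filter (G.Adj v) : Finset V) := (coe_filter _ _).symm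
  rw [← coe_erase, hN] at hcard
  have hχ := G.cliqueEulerChar_add hv
  rw [ih _ (erase_ssubset hv), ih _ ((filter_subset _ _).trans_ssubset (erase_ssubset hv))] at hχ
  omega

lemma cliqueEulerChar_eq_sum_cliqueComplex {R : Type*} [Fintype V] [Ring R] (J : Finset V) :
    (G.cliqueEulerChar J : R) = ∑ I ∈ G.cliqueComplex.filter (· ⊆ J), (-1 : R) ^ (#I - 1) := by
  have h : G.cliqueComplex.filter (· ⊆ J) =
      J.powerset.filter (fun I : Finset V => I.Nonempty ∧ G.IsClique (I : Set V)) := by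
    ext I
    simp only [cliqueComplex, mem_filter, mem_powerset, subset_univ, true_and]
    tauto
  rw [h, cliqueEulerChar]
  push_cast
  rfl

end SimpleGraph

section Atom

variable {Ω V : Type*} [Fintype V] {A : V → Set Ω}

def atom (A : V → Set Ω) (J : Finset V) : Set Ω :=
  (⋂ i ∈ J, A i) ∩ ⋂ i ∈ (Jᶜ : Finset V), (A i)ᶜ

lemma mem_atom_iff {ω : Ω} {J : Finset V} : ω ∈ atom A J ↔ J = univ.filter (ω ∈ A ·) := by
  simp only [atom, Set.mem_inter_iff, Set.mem_iInter, Set.mem_compl_iff, mem_compl,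
    Finset.ext_iff, mem_filter, mem_univ, true_and]
  exact ⟨fun h i => ⟨h.1 i, fun hi => by_contra fun hJ => h.2 i hJ hi⟩,
    fun h => ⟨fun i => (h i).1, fun i hJ hi => hJ ((h i).2 hi)⟩⟩

lemma pairwiseDisjoint_atom (S : Set (Finset V)) : S.PairwiseDisjoint (atom A) :=
  fun _ _ _ _ hJK => Set.disjoint_left.2 fun _ hJ hK =>
    hJK ((mem_atom_iff.1 hJ).trans (mem_atom_iff.1 hK).symm)

lemma biInter_eq_biUnion_atom (I : Finset V) :
    ⋂ i ∈ I, A i = ⋃ J ∈ univ.filter (I ⊆ ·), atom A J := by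
  ext ω
  simp [mem_atom_iff, subset_iff]

lemma iUnion_eq_biUnion_atom : ⋃ v, A v = ⋃ J ∈ univ.filter Finset.Nonempty, atom A J := by
  ext ω
  simp [mem_atom_iff, Finset.Nonempty]

variable [MeasurableSpace Ω] (μ : Measure Ω) [IsFiniteMeasure μ]

lemma measureReal_biUnion_atom (hA : ∀ v, MeasurableSet (A v)) (S : Finset (Finset V)) :
    μ.real (⋃ J ∈ S, atom A J) = ∑ J ∈ S, μ.real (atom A J) :=
  measureReal_biUnion_finset (pairwiseDisjoint_atom _) fun _ _ =>
    (Finset.measurableSet_biInter _ fun i _ => hA i).inter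
      (Finset.measurableSet_biInter _ fun i _ => (hA i).compl)

theorem sum_mul_measureReal_biInter (hA : ∀ v, MeasurableSet (A v)) (w : Finset V → ℝ)
    (S : Finset (Finset V)) :
    ∑ I ∈ S, w I * μ.real (⋂ i ∈ I, A i) =
      ∑ J, (∑ I ∈ S.filter (· ⊆ J), w I) * μ.real (atom A J) := by
  simp only [biInter_eq_biUnion_atom, measureReal_biUnion_atom μ hA, mul_sum, sum_mul,
    sum_filter]
  rw [sum_comm]
  refine sum_congr rfl fun J _ => sum_congr rfl fun I _ => ?_
  split_ifs <;> simp

theorem sum_mul_measureReal_atom_le (hA : ∀ v, MeasurableSet (A v)) {c : Finset V → ℝ} {M : ℝ}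
    (h0 : c ∅ = 0) (hc : ∀ J, J.Nonempty → atom A J ≠ ∅ → c J ≤ M) :
    ∑ J, c J * μ.real (atom A J) ≤ M * μ.real (⋃ v, A v) := by
  rw [iUnion_eq_biUnion_atom, measureReal_biUnion_atom μ hA, mul_sum]
  calc ∑ J, c J * μ.real (atom A J)
      = ∑ J ∈ univ.filter Finset.Nonempty, c J * μ.real (atom A J) := by
        rw [sum_filter]
        refine sum_congr rfl fun J _ => ?_
        rcases J.eq_empty_or_nonempty with rfl | hJ
        · simp [h0]
        · rw [if_pos hJ]
    _ ≤ ∑ J ∈ univ.filter Finset.Nonempty, M * μ.real (atom A J) := by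
        refine sum_le_sum fun J hJ => ?_
        by_cases hAJ : atom A J = ∅
        · simp [hAJ]
        · exact mul_le_mul_of_nonneg_right (hc J (mem_filter.1 hJ).2 hAJ) measureReal_nonneg

end Atom

theorem chordal_graph_sieve_lower_sharpened_general {Ω V : Type*} [MeasurableSpace Ω] [Fintype V]
    (μ : Measure Ω) [IsProbabilityMeasure μ]
    (G : SimpleGraph V) (hG : G.IsChordal)
    (A : V → Set Ω) (hA : ∀ v, MeasurableSet (A v))
    (B : Finset V → Set Ω)
    (hB : ∀ J : Finset V, B J = (⋂ i ∈ J, A i) ∩ ⋂ i ∈ (Jᶜ : Finset V), (A i)ᶜ) :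
    (μ (⋃ v, A v)).toReal ≥
      (1 / (sSup {c : ℕ | ∃ J : Finset V, J.Nonempty ∧ B J ≠ ∅ ∧
              c = Nat.card (G.induce (J : Set V)).ConnectedComponent} : ℕ)) *
        ∑ I ∈ G.cliqueComplex, (-1 : ℝ) ^ (I.card - 1) * (μ (⋂ i ∈ I, A i)).toReal := by
  obtain rfl : B = atom A := funext hB
  set S := {c : ℕ | ∃ J : Finset V, J.Nonempty ∧ atom A J ≠ ∅ ∧
    c = Nat.card (G.induce (J : Set V)).ConnectedComponent}
  have hS : BddAbove S := by
    refine ((Set.finite_range fun J : Finset V =>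
      Nat.card (G.induce (J : Set V)).ConnectedComponent).subset ?_).bddAbove
    rintro _ ⟨J, -, -, rfl⟩
    exact ⟨J, rfl⟩
  have hsum : ∑ I ∈ G.cliqueComplex, (-1 : ℝ) ^ (#I - 1) * μ.real (⋂ i ∈ I, A i) ≤
      μ.real (⋃ v, A v) * (sSup S : ℕ) := by
    rw [sum_mul_measureReal_biInter μ hA, mul_comm]
    simp only [← G.cliqueEulerChar_eq_sum_cliqueComplex,
      hG.cliqueEulerChar_eq_card_connectedComponent, Int.cast_natCast]
    refine sum_mul_measureReal_atom_le μ hA (by simp) fun J hJ hAJ => ?_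
    exact_mod_cast le_csSup hS ⟨J, hJ, hAJ, rfl⟩
  simp only [← measureReal_def] at hsum ⊢
  -- `div_le_of_le_mul₀` also covers `sSup S = 0`, where `1 / 0 = 0` in `ℝ`.
  rw [ge_iff_le, one_div_mul_eq_div]
  exact div_le_of_le_mul₀ (by positivity) measureReal_nonneg hsum

theorem chordal_graph_sieve_lower_sharpened {Ω V : Type*} [MeasurableSpace Ω] [Fintype V]
    [Nonempty V] (μ : Measure Ω) [IsProbabilityMeasure μ]
    (G : SimpleGraph V) (hG : G.IsChordal)
    (A : V → Set Ω) (hA : ∀ v, MeasurableSet (A v))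
    (B : Finset V → Set Ω)
    (hB : ∀ J : Finset V, B J = (⋂ i ∈ J, A i) ∩ ⋂ i ∈ (Jᶜ : Finset V), (A i)ᶜ)
    (hne : ∃ J : Finset V, J.Nonempty ∧ B J ≠ ∅) :
    (μ (⋃ v, A v)).toReal ≥
      (1 / (sSup {c : ℕ | ∃ J : Finset V, J.Nonempty ∧ B J ≠ ∅ ∧
              c = Nat.card (G.induce (J : Set V)).ConnectedComponent} : ℕ)) *
        ∑ I ∈ G.cliqueComplex, (-1 : ℝ) ^ (I.card - 1) * (μ (⋂ i ∈ I, A i)).toReal :=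
  chordal_graph_sieve_lower_sharpened_general μ G hG A hA B hB
end
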